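/- Let δ > 0 be small. For the heat kernel K(t,x) = (4πt)^{-d/2} e^{-|x|²/(4t)} on ℝ^d with d = 2, there is a constant C such that for all 0 < t₁ ≤ t₂ and all x ≠ 0: |K(t₁,x) - K(t₂,x)| ≤ C |t₂-t₁|^δ (t₂^{-1/2+δ/2} + t₁^{-1/2+δ/2}) |x|^{-1-3δ}. -/

import Mathlib

open MeasureTheory Real

/-- The 2-dimensional heat kernel `K(t,x) = (4πt)⁻¹ e^{-|x|²/(4t)}` on `ℝ²`. -/
noncomputable def heatKernel2 (t : ℝ) (x : EuclideanSpace ℝ (Fin 2)) : ℝ :=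
  (4 * π * t)⁻¹ * Real.exp (-‖x‖ ^ 2 / (4 * t))

private lemma exp_neg_le_aux {β u : ℝ} (hβ : 0 < β) (hβ2 : β ≤ 2) (hu : 0 < u) :
    Real.exp (-u) ≤ 2 * u ^ (-β) := by
  rcases le_total u 1 with h | h
  · have h1 : Real.exp (-u) ≤ 1 := Real.exp_le_one_iff.mpr (by linarith)
    have h2 : (1 : ℝ) ≤ u ^ (-β) :=
      Real.one_le_rpow_of_pos_of_le_one_of_nonpos hu h (by linarith)
    linarith
  · have hq : u ^ 2 / 2 ≤ Real.exp u := by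
      have := Real.quadratic_le_exp_of_nonneg (by linarith : (0:ℝ) ≤ u)
      linarith
    have hprod : Real.exp u * Real.exp (-u) = 1 := by
      rw [← Real.exp_add]; simp
    have h1 : Real.exp (-u) ≤ 2 / u ^ 2 := by
      rw [le_div_iff₀ (by positivity)]
      nlinarith [Real.exp_pos (-u)]
    have h2 : u ^ (-(2:ℝ)) ≤ u ^ (-β) :=
      Real.rpow_le_rpow_of_exponent_le h (by linarith)
    have h3 : u ^ (-(2:ℝ)) = (u ^ 2)⁻¹ := by
      rw [Real.rpow_neg hu.le, Real.rpow_two]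
    calc Real.exp (-u) ≤ 2 / u ^ 2 := h1
      _ = 2 * u ^ (-(2:ℝ)) := by rw [h3]; ring
      _ ≤ 2 * u ^ (-β) := by linarith

private lemma mul_exp_neg_le_aux {β u : ℝ} (hβ : 0 < β) (hβ2 : β ≤ 2) (hu : 0 < u) :
    u * Real.exp (-u) ≤ 6 * u ^ (-β) := by
  rcases le_total u 1 with h | h
  · have h1 : Real.exp (-u) ≤ 1 := Real.exp_le_one_iff.mpr (by linarith)
    have h2 : (1 : ℝ) ≤ u ^ (-β) :=
      Real.one_le_rpow_of_pos_of_le_one_of_nonpos hu h (by linarith)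
    nlinarith [Real.exp_pos (-u)]
  · have hq : u ^ 3 / 6 ≤ Real.exp u := by
      have := Real.sum_le_exp_of_nonneg (by linarith : (0:ℝ) ≤ u) 4
      norm_num [Finset.sum_range_succ, Nat.factorial] at this
      nlinarith
    have hprod : Real.exp u * Real.exp (-u) = 1 := by
      rw [← Real.exp_add]; simp
    have h1 : Real.exp (-u) ≤ 6 / u ^ 3 := by
      rw [le_div_iff₀ (by positivity)]
      nlinarith [Real.exp_pos (-u)]
    have h4 : u * Real.exp (-u) ≤ 6 / u ^ 2 := by
      rw [le_div_iff₀ (by positivity)]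
      rw [le_div_iff₀ (by positivity)] at h1
      nlinarith [Real.exp_pos (-u)]
    have h2 : u ^ (-(2:ℝ)) ≤ u ^ (-β) :=
      Real.rpow_le_rpow_of_exponent_le h (by linarith)
    have h3 : u ^ (-(2:ℝ)) = (u ^ 2)⁻¹ := by
      rw [Real.rpow_neg hu.le, Real.rpow_two]
    calc u * Real.exp (-u) ≤ 6 / u ^ 2 := h4
      _ = 6 * u ^ (-(2:ℝ)) := by rw [h3]; ring
      _ ≤ 6 * u ^ (-β) := by linarith

set_option maxHeartbeats 1600000 in
private lemma key_estimate {δ c t₁ t₂ : ℝ} (hδ : 0 < δ) (hδ1 : δ < 1) (hc : 0 < c)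
    (h1 : 0 < t₁) (h12 : t₁ < t₂) :
    |t₁⁻¹ * Real.exp (-(c / t₁)) - t₂⁻¹ * Real.exp (-(c / t₂))| ≤
      14 * (t₂ - t₁) ^ δ * (t₂ ^ (-(1:ℝ)/2 + δ/2) + t₁ ^ (-(1:ℝ)/2 + δ/2)) *
        c ^ (-((1 + 3*δ)/2)) := by
  set β : ℝ := (1 + 3*δ)/2 with hβdef
  set p : ℝ := -(1:ℝ)/2 + δ/2 with hpdef
  have hβ : 0 < β := by rw [hβdef]; linarith
  have hβ2 : β ≤ 2 := by rw [hβdef]; linarith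
  have h2 : 0 < t₂ := h1.trans h12
  have hs : 0 < t₂ - t₁ := by linarith
  have ha : 0 < c / t₂ := by positivity
  have hb : 0 < c / t₁ := by positivity
  have hcβ : 0 < c ^ (-β) := Real.rpow_pos_of_pos hc _
  have hba : t₂⁻¹ ≤ t₁⁻¹ := by
    apply inv_anti₀ h1 h12.le
  have hab : c / t₂ ≤ c / t₁ := by
    apply div_le_div_of_nonneg_left hc.le h1 h12.le
  -- rewrite (c/t)^(-β) = c^(-β) * t^β
  have hdivpow : ∀ t : ℝ, 0 < t → (c / t) ^ (-β) = c ^ (-β) * t ^ β := by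
    intro t ht
    rw [Real.div_rpow hc.le ht.le, Real.rpow_neg hc.le, Real.rpow_neg ht.le]
    field_simp
  rcases le_or_gt t₂ (2 * t₁) with hcase | hcase
  · -- comparable times
    -- term A : (t₁⁻¹ - t₂⁻¹) * exp(-(c/t₁))
    have eA : (t₁⁻¹ - t₂⁻¹) * Real.exp (-(c / t₁)) ≤
        2 * (t₂ - t₁) * t₁ ^ (β - 2) * c ^ (-β) := by
      have e1 : Real.exp (-(c / t₁)) ≤ 2 * (c / t₁) ^ (-β) := exp_neg_le_aux hβ hβ2 hb
      have heq : t₁⁻¹ - t₂⁻¹ = (t₂ - t₁) * t₁⁻¹ * t₂⁻¹ := by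
        field_simp
      have e2 : t₁⁻¹ - t₂⁻¹ ≤ (t₂ - t₁) * t₁⁻¹ * t₁⁻¹ := by
        rw [heq]
        have hnn : 0 ≤ (t₂ - t₁) * t₁⁻¹ := by positivity
        nlinarith
      have e3 : (0:ℝ) ≤ t₁⁻¹ - t₂⁻¹ := by linarith
      have ht1 : t₁ ^ (β - 2) = t₁ ^ β * (t₁⁻¹ * t₁⁻¹) := by
        rw [show β - 2 = β + (-1) + (-1) by ring, Real.rpow_add h1, Real.rpow_add h1,
          Real.rpow_neg_one]
        ring
      calc (t₁⁻¹ - t₂⁻¹) * Real.exp (-(c / t₁))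
          ≤ ((t₂ - t₁) * t₁⁻¹ * t₁⁻¹) * (2 * (c / t₁) ^ (-β)) := by
            apply mul_le_mul e2 e1 (Real.exp_pos _).le (by positivity)
        _ = 2 * (t₂ - t₁) * t₁ ^ (β - 2) * c ^ (-β) := by
            rw [hdivpow t₁ h1, ht1]; ring
    -- term B : t₂⁻¹ * (exp(-(c/t₂)) - exp(-(c/t₁)))
    have eB : t₂⁻¹ * (Real.exp (-(c / t₂)) - Real.exp (-(c / t₁))) ≤
        12 * (t₂ - t₁) * t₁ ^ (β - 2) * c ^ (-β) := by
      have hsplit : Real.exp (-(c / t₁)) =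
          Real.exp (-(c / t₂)) * Real.exp (-(c / t₁ - c / t₂)) := by
        rw [← Real.exp_add]; ring_nf
      have hlip : Real.exp (-(c / t₂)) - Real.exp (-(c / t₁)) ≤
          Real.exp (-(c / t₂)) * (c / t₁ - c / t₂) := by
        rw [hsplit]
        have h5 : 1 - (c / t₁ - c / t₂) ≤ Real.exp (-(c / t₁ - c / t₂)) := by
          have := Real.add_one_le_exp (-(c / t₁ - c / t₂))
          linarith
        nlinarith [Real.exp_pos (-(c / t₂))]
      have hdiff : c / t₁ - c / t₂ = (c / t₂) * (t₂ - t₁) / t₁ := by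
        field_simp
      have e1 : (c / t₂) * Real.exp (-(c / t₂)) ≤ 6 * (c / t₂) ^ (-β) :=
        mul_exp_neg_le_aux hβ hβ2 ha
      have estep : t₂⁻¹ * (Real.exp (-(c / t₂)) - Real.exp (-(c / t₁))) ≤
          t₂⁻¹ * ((c / t₂) * Real.exp (-(c / t₂)) * (t₂ - t₁) / t₁) := by
        apply mul_le_mul_of_nonneg_left _ (by positivity)
        calc Real.exp (-(c / t₂)) - Real.exp (-(c / t₁))
            ≤ Real.exp (-(c / t₂)) * (c / t₁ - c / t₂) := hlip
          _ = (c / t₂) * Real.exp (-(c / t₂)) * (t₂ - t₁) / t₁ := by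
              rw [hdiff]; ring
      have estep2 : t₂⁻¹ * ((c / t₂) * Real.exp (-(c / t₂)) * (t₂ - t₁) / t₁) ≤
          t₂⁻¹ * (6 * (c / t₂) ^ (-β) * (t₂ - t₁) / t₁) := by
        gcongr
      have ht2b : t₂ ^ (β - 2) ≤ t₁ ^ (β - 2) :=
        Real.rpow_le_rpow_of_nonpos h1 h12.le (by rw [hβdef]; linarith)
      have h1inv : t₁⁻¹ ≤ 2 * t₂⁻¹ := by
        have i1 : t₁⁻¹ * t₁ = 1 := inv_mul_cancel₀ h1.ne'
        have i2 : t₂⁻¹ * t₂ = 1 := inv_mul_cancel₀ h2.ne'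
        have p1 : (0:ℝ) < t₁⁻¹ := by positivity
        have p2 : (0:ℝ) < t₂⁻¹ := by positivity
        nlinarith
      have hb1 : t₂ ^ β * t₂⁻¹ = t₂ ^ (β - 1) := by
        rw [Real.rpow_sub h2, Real.rpow_one]; ring
      have hb2 : t₂ ^ (β - 1) * t₂⁻¹ = t₂ ^ (β - 2) := by
        rw [show t₂⁻¹ = t₂ ^ (-1:ℝ) from (Real.rpow_neg_one t₂).symm, ← Real.rpow_add h2]
        congr 1; ring
      have hfin : t₂⁻¹ * (6 * (c / t₂) ^ (-β) * (t₂ - t₁) / t₁) ≤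
          12 * (t₂ - t₁) * t₁ ^ (β - 2) * c ^ (-β) := by
        rw [hdivpow t₂ h2]
        have hstep : t₂⁻¹ * (6 * (c ^ (-β) * t₂ ^ β) * (t₂ - t₁) / t₁)
            = 6 * (t₂ - t₁) * c ^ (-β) * (t₂ ^ β * t₂⁻¹) * t₁⁻¹ := by
          field_simp
        rw [hstep, hb1]
        calc 6 * (t₂ - t₁) * c ^ (-β) * t₂ ^ (β - 1) * t₁⁻¹
            ≤ 6 * (t₂ - t₁) * c ^ (-β) * t₂ ^ (β - 1) * (2 * t₂⁻¹) := by
              have hnn : 0 ≤ 6 * (t₂ - t₁) * c ^ (-β) * t₂ ^ (β - 1) := by positivity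
              exact mul_le_mul_of_nonneg_left h1inv hnn
          _ = 12 * (t₂ - t₁) * c ^ (-β) * (t₂ ^ (β - 1) * t₂⁻¹) := by ring
          _ = 12 * (t₂ - t₁) * c ^ (-β) * t₂ ^ (β - 2) := by rw [hb2]
          _ ≤ 12 * (t₂ - t₁) * c ^ (-β) * t₁ ^ (β - 2) := by
              have hnn : 0 ≤ 12 * (t₂ - t₁) * c ^ (-β) := by positivity
              exact mul_le_mul_of_nonneg_left ht2b hnn
          _ = 12 * (t₂ - t₁) * t₁ ^ (β - 2) * c ^ (-β) := by ring
      calc t₂⁻¹ * (Real.exp (-(c / t₂)) - Real.exp (-(c / t₁)))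
          ≤ t₂⁻¹ * ((c / t₂) * Real.exp (-(c / t₂)) * (t₂ - t₁) / t₁) := estep
        _ ≤ t₂⁻¹ * (6 * (c / t₂) ^ (-β) * (t₂ - t₁) / t₁) := estep2
        _ ≤ 12 * (t₂ - t₁) * t₁ ^ (β - 2) * c ^ (-β) := hfin
    -- combine
    have habs : |t₁⁻¹ * Real.exp (-(c / t₁)) - t₂⁻¹ * Real.exp (-(c / t₂))| ≤
        (t₁⁻¹ - t₂⁻¹) * Real.exp (-(c / t₁)) +
          t₂⁻¹ * (Real.exp (-(c / t₂)) - Real.exp (-(c / t₁))) := by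
      have hexp_mono : Real.exp (-(c / t₁)) ≤ Real.exp (-(c / t₂)) :=
        Real.exp_le_exp.mpr (by linarith)
      have hid : t₁⁻¹ * Real.exp (-(c / t₁)) - t₂⁻¹ * Real.exp (-(c / t₂)) =
          (t₁⁻¹ - t₂⁻¹) * Real.exp (-(c / t₁)) -
            t₂⁻¹ * (Real.exp (-(c / t₂)) - Real.exp (-(c / t₁))) := by ring
      rw [hid]
      have p1 : (0:ℝ) ≤ (t₁⁻¹ - t₂⁻¹) * Real.exp (-(c / t₁)) := by
        apply mul_nonneg (by linarith) (Real.exp_pos _).le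
      have p2 : (0:ℝ) ≤ t₂⁻¹ * (Real.exp (-(c / t₂)) - Real.exp (-(c / t₁))) := by
        apply mul_nonneg (by positivity) (by linarith)
      rw [abs_sub_le_iff]
      constructor <;> linarith
    -- (t₂-t₁) * t₁^(β-2) ≤ (t₂-t₁)^δ * t₁^p
    have hpow : (t₂ - t₁) * t₁ ^ (β - 2) ≤ (t₂ - t₁) ^ δ * t₁ ^ p := by
      have hsle : t₂ - t₁ ≤ t₁ := by linarith
      have e1 : t₂ - t₁ = (t₂ - t₁) ^ δ * (t₂ - t₁) ^ (1 - δ) := by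
        rw [← Real.rpow_add hs]; norm_num
      have e2 : (t₂ - t₁) ^ (1 - δ) ≤ t₁ ^ (1 - δ) :=
        Real.rpow_le_rpow hs.le hsle (by linarith)
      have e3 : t₁ ^ (1 - δ) * t₁ ^ (β - 2) = t₁ ^ p := by
        rw [← Real.rpow_add h1]
        congr 1
        rw [hβdef, hpdef]; ring
      calc (t₂ - t₁) * t₁ ^ (β - 2)
          = (t₂ - t₁) ^ δ * ((t₂ - t₁) ^ (1 - δ) * t₁ ^ (β - 2)) := by
            conv_lhs => rw [e1]
            ring
        _ ≤ (t₂ - t₁) ^ δ * (t₁ ^ (1 - δ) * t₁ ^ (β - 2)) := by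
            have hnn : 0 ≤ (t₂ - t₁) ^ δ := Real.rpow_nonneg hs.le _
            have hnn2 : 0 ≤ t₁ ^ (β - 2) := (Real.rpow_pos_of_pos h1 _).le
            apply mul_le_mul_of_nonneg_left _ hnn
            exact mul_le_mul_of_nonneg_right e2 hnn2
        _ = (t₂ - t₁) ^ δ * t₁ ^ p := by rw [e3]
    have hfinal : |t₁⁻¹ * Real.exp (-(c / t₁)) - t₂⁻¹ * Real.exp (-(c / t₂))| ≤
        14 * ((t₂ - t₁) ^ δ * t₁ ^ p) * c ^ (-β) := by
      calc |t₁⁻¹ * Real.exp (-(c / t₁)) - t₂⁻¹ * Real.exp (-(c / t₂))|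
          ≤ (t₁⁻¹ - t₂⁻¹) * Real.exp (-(c / t₁)) +
              t₂⁻¹ * (Real.exp (-(c / t₂)) - Real.exp (-(c / t₁))) := habs
        _ ≤ 2 * (t₂ - t₁) * t₁ ^ (β - 2) * c ^ (-β) +
              12 * (t₂ - t₁) * t₁ ^ (β - 2) * c ^ (-β) := by linarith
        _ = 14 * ((t₂ - t₁) * t₁ ^ (β - 2)) * c ^ (-β) := by ring
        _ ≤ 14 * ((t₂ - t₁) ^ δ * t₁ ^ p) * c ^ (-β) := by gcongr
    calc |t₁⁻¹ * Real.exp (-(c / t₁)) - t₂⁻¹ * Real.exp (-(c / t₂))|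
        ≤ 14 * ((t₂ - t₁) ^ δ * t₁ ^ p) * c ^ (-β) := hfinal
      _ = 14 * (t₂ - t₁) ^ δ * t₁ ^ p * c ^ (-β) := by ring
      _ ≤ 14 * (t₂ - t₁) ^ δ * (t₂ ^ p + t₁ ^ p) * c ^ (-β) := by
          have w1 : (0:ℝ) ≤ (t₂ - t₁) ^ δ := Real.rpow_nonneg hs.le _
          have w2 : (0:ℝ) ≤ t₂ ^ p := (Real.rpow_pos_of_pos h2 _).le
          gcongr
          linarith
  · -- far apart times : t₂ > 2 t₁, use triangle inequality
    have bK : ∀ t : ℝ, 0 < t → t⁻¹ * Real.exp (-(c / t)) ≤ 2 * t ^ (β - 1) * c ^ (-β) := by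
      intro t ht
      have e1 : Real.exp (-(c / t)) ≤ 2 * (c / t) ^ (-β) :=
        exp_neg_le_aux hβ hβ2 (by positivity)
      have ht1 : t ^ (β - 1) = t ^ β * t⁻¹ := by
        rw [Real.rpow_sub ht, Real.rpow_one]; ring
      calc t⁻¹ * Real.exp (-(c / t)) ≤ t⁻¹ * (2 * (c / t) ^ (-β)) := by
            apply mul_le_mul_of_nonneg_left e1 (by positivity)
        _ = 2 * t ^ (β - 1) * c ^ (-β) := by
            rw [hdivpow t ht, ht1]; ring
    have b1 : t₁ ^ (β - 1) ≤ (t₂ - t₁) ^ δ * t₁ ^ p := by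
      have e1 : t₁ ^ (β - 1) = t₁ ^ δ * t₁ ^ p := by
        rw [← Real.rpow_add h1]
        congr 1
        rw [hβdef, hpdef]; ring
      have e2 : t₁ ^ δ ≤ (t₂ - t₁) ^ δ :=
        Real.rpow_le_rpow h1.le (by linarith) hδ.le
      rw [e1]
      apply mul_le_mul_of_nonneg_right e2 (Real.rpow_pos_of_pos h1 p).le
    have b2 : t₂ ^ (β - 1) ≤ 2 * (t₂ - t₁) ^ δ * t₂ ^ p := by
      have e1 : t₂ ^ (β - 1) = t₂ ^ δ * t₂ ^ p := by
        rw [← Real.rpow_add h2]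
        congr 1
        rw [hβdef, hpdef]; ring
      have e2 : t₂ ^ δ ≤ 2 * (t₂ - t₁) ^ δ := by
        have h4 : t₂ ≤ 2 * (t₂ - t₁) := by linarith
        have h2δ : (2:ℝ) ^ δ ≤ 2 := by
          calc (2:ℝ) ^ δ ≤ 2 ^ (1:ℝ) :=
              Real.rpow_le_rpow_of_exponent_le one_le_two hδ1.le
            _ = 2 := Real.rpow_one 2
        have hnn := Real.rpow_nonneg hs.le δ
        calc t₂ ^ δ ≤ (2 * (t₂ - t₁)) ^ δ := Real.rpow_le_rpow h2.le h4 hδ.le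
          _ = 2 ^ δ * (t₂ - t₁) ^ δ := Real.mul_rpow (by norm_num) hs.le
          _ ≤ 2 * (t₂ - t₁) ^ δ := mul_le_mul_of_nonneg_right h2δ hnn
      rw [e1]
      calc t₂ ^ δ * t₂ ^ p ≤ (2 * (t₂ - t₁) ^ δ) * t₂ ^ p :=
            mul_le_mul_of_nonneg_right e2 (Real.rpow_pos_of_pos h2 p).le
        _ = 2 * (t₂ - t₁) ^ δ * t₂ ^ p := by ring
    have habs : |t₁⁻¹ * Real.exp (-(c / t₁)) - t₂⁻¹ * Real.exp (-(c / t₂))| ≤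
        t₁⁻¹ * Real.exp (-(c / t₁)) + t₂⁻¹ * Real.exp (-(c / t₂)) := by
      have p1 : (0:ℝ) ≤ t₁⁻¹ * Real.exp (-(c / t₁)) := by positivity
      have p2 : (0:ℝ) ≤ t₂⁻¹ * Real.exp (-(c / t₂)) := by positivity
      rw [abs_sub_le_iff]; constructor <;> linarith
    calc |t₁⁻¹ * Real.exp (-(c / t₁)) - t₂⁻¹ * Real.exp (-(c / t₂))|
        ≤ t₁⁻¹ * Real.exp (-(c / t₁)) + t₂⁻¹ * Real.exp (-(c / t₂)) := habs
      _ ≤ 2 * t₁ ^ (β - 1) * c ^ (-β) + 2 * t₂ ^ (β - 1) * c ^ (-β) :=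
          add_le_add (bK t₁ h1) (bK t₂ h2)
      _ ≤ 2 * ((t₂ - t₁) ^ δ * t₁ ^ p) * c ^ (-β) +
            2 * (2 * (t₂ - t₁) ^ δ * t₂ ^ p) * c ^ (-β) := by
          have m1 := mul_le_mul_of_nonneg_right
            (mul_le_mul_of_nonneg_left b1 (by norm_num : (0:ℝ) ≤ 2)) hcβ.le
          have m2 := mul_le_mul_of_nonneg_right
            (mul_le_mul_of_nonneg_left b2 (by norm_num : (0:ℝ) ≤ 2)) hcβ.le
          linarith
      _ = 2 * ((t₂ - t₁) ^ δ * t₁ ^ p * c ^ (-β)) +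
            4 * ((t₂ - t₁) ^ δ * t₂ ^ p * c ^ (-β)) := by ring
      _ ≤ 14 * ((t₂ - t₁) ^ δ * t₂ ^ p * c ^ (-β)) +
            14 * ((t₂ - t₁) ^ δ * t₁ ^ p * c ^ (-β)) := by
          have q1 : (0:ℝ) ≤ (t₂ - t₁) ^ δ * t₁ ^ p * c ^ (-β) := by positivity
          have q2 : (0:ℝ) ≤ (t₂ - t₁) ^ δ * t₂ ^ p * c ^ (-β) := by positivity
          linarith
      _ = 14 * (t₂ - t₁) ^ δ * (t₂ ^ p + t₁ ^ p) * c ^ (-β) := by ring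

set_option maxHeartbeats 1600000 in
/-- Time-Hölder continuity of the 2d heat kernel: for every small `δ > 0` there is `C` with
`|K(t₁,x) - K(t₂,x)| ≤ C |t₂-t₁|^δ (t₂^{-1/2+δ/2} + t₁^{-1/2+δ/2}) |x|^{-1-3δ}`
for all `0 < t₁ ≤ t₂` and `x ≠ 0`. -/
theorem heatKernel_time_hoelder (δ : ℝ) (hδ : 0 < δ) (hδ1 : δ < 1) :
    ∃ C : ℝ, 0 < C ∧ ∀ t₁ t₂ : ℝ, 0 < t₁ → t₁ ≤ t₂ → ∀ x : EuclideanSpace ℝ (Fin 2), x ≠ 0 →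
      |heatKernel2 t₁ x - heatKernel2 t₂ x| ≤
        C * |t₂ - t₁| ^ δ * (t₂ ^ (-(1 : ℝ) / 2 + δ / 2) + t₁ ^ (-(1 : ℝ) / 2 + δ / 2)) *
          ‖x‖ ^ (-1 - 3 * δ) := by
  refine ⟨224, by norm_num, fun t₁ t₂ h1 h12 x hx => ?_⟩
  have h2 : 0 < t₂ := lt_of_lt_of_le h1 h12
  rcases eq_or_lt_of_le h12 with heq | hlt
  · subst heq
    simp [abs_of_nonneg, Real.zero_rpow hδ.ne']
  have hr : 0 < ‖x‖ := norm_pos_iff.mpr hx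
  set r : ℝ := ‖x‖ with hrdef
  set c : ℝ := r ^ 2 / 4 with hcdef
  have hc : 0 < c := by positivity
  -- rewrite the heat kernel
  have hK : ∀ t : ℝ, 0 < t → heatKernel2 t x = (4 * π)⁻¹ * (t⁻¹ * Real.exp (-(c / t))) := by
    intro t ht
    unfold heatKernel2
    have : -‖x‖ ^ 2 / (4 * t) = -(c / t) := by
      rw [hcdef]; field_simp; rw [hrdef]
    rw [this, mul_inv, mul_assoc]
  have hs : 0 < t₂ - t₁ := by linarith
  have habs : |t₂ - t₁| = t₂ - t₁ := abs_of_pos hs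
  have hkey := key_estimate hδ hδ1 hc h1 hlt
  -- c^(-β) ≤ 16 * r^(-1-3δ)
  have hcr : c ^ (-((1 + 3*δ)/2)) ≤ 16 * r ^ (-1 - 3*δ) := by
    have e1 : c ^ (-((1 + 3*δ)/2)) = (r^2) ^ (-((1 + 3*δ)/2)) * 4 ^ ((1 + 3*δ)/2) := by
      rw [hcdef, Real.div_rpow (by positivity) (by norm_num),
        Real.rpow_neg (by norm_num : (0:ℝ) ≤ 4)]
      field_simp
    have e2 : ((r:ℝ)^2) ^ (-((1 + 3*δ)/2)) = r ^ (-1 - 3*δ) := by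
      rw [← Real.rpow_natCast r 2, ← Real.rpow_mul hr.le]
      congr 1
      push_cast
      ring
    have e3 : (4:ℝ) ^ ((1 + 3*δ)/2) ≤ 16 := by
      calc (4:ℝ) ^ ((1 + 3*δ)/2) ≤ 4 ^ (2:ℝ) :=
          Real.rpow_le_rpow_of_exponent_le (by norm_num) (by linarith)
        _ = 16 := by
          rw [show (2:ℝ) = ((2:ℕ):ℝ) by norm_num, Real.rpow_natCast]; norm_num
    have hrp : (0:ℝ) < r ^ (-1 - 3*δ) := Real.rpow_pos_of_pos hr _
    calc c ^ (-((1 + 3*δ)/2)) = r ^ (-1 - 3*δ) * 4 ^ ((1 + 3*δ)/2) := by rw [e1, e2]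
      _ ≤ r ^ (-1 - 3*δ) * 16 := mul_le_mul_of_nonneg_left e3 hrp.le
      _ = 16 * r ^ (-1 - 3*δ) := by ring
  have hπ : (4 * π)⁻¹ ≤ 1 := by
    apply inv_le_one_of_one_le₀
    nlinarith [Real.pi_gt_three]
  calc |heatKernel2 t₁ x - heatKernel2 t₂ x|
      = (4 * π)⁻¹ * |t₁⁻¹ * Real.exp (-(c / t₁)) - t₂⁻¹ * Real.exp (-(c / t₂))| := by
        rw [hK t₁ h1, hK t₂ h2, ← mul_sub, abs_mul, abs_of_nonneg (by positivity)]
    _ ≤ 1 * (14 * (t₂ - t₁) ^ δ * (t₂ ^ (-(1:ℝ)/2 + δ/2) + t₁ ^ (-(1:ℝ)/2 + δ/2)) *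
          c ^ (-((1 + 3*δ)/2))) := by
        apply mul_le_mul hπ hkey (abs_nonneg _) one_pos.le
    _ ≤ 1 * (14 * (t₂ - t₁) ^ δ * (t₂ ^ (-(1:ℝ)/2 + δ/2) + t₁ ^ (-(1:ℝ)/2 + δ/2)) *
          (16 * r ^ (-1 - 3*δ))) := by
        have w1 : (0:ℝ) ≤ (t₂ - t₁) ^ δ := Real.rpow_nonneg hs.le _
        have w2 : (0:ℝ) ≤ t₂ ^ (-(1:ℝ)/2 + δ/2) := (Real.rpow_pos_of_pos h2 _).le
        have w3 : (0:ℝ) ≤ t₁ ^ (-(1:ℝ)/2 + δ/2) := (Real.rpow_pos_of_pos h1 _).le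
        have hnn : (0:ℝ) ≤ 14 * (t₂ - t₁) ^ δ *
            (t₂ ^ (-(1:ℝ)/2 + δ/2) + t₁ ^ (-(1:ℝ)/2 + δ/2)) := by positivity
        rw [one_mul, one_mul]
        exact mul_le_mul_of_nonneg_left hcr hnn
    _ = 224 * (t₂ - t₁) ^ δ * (t₂ ^ (-(1:ℝ)/2 + δ/2) + t₁ ^ (-(1:ℝ)/2 + δ/2)) *
          r ^ (-1 - 3*δ) := by ring
    _ = 224 * |t₂ - t₁| ^ δ * (t₂ ^ (-(1 : ℝ)/2 + δ/2) + t₁ ^ (-(1:ℝ)/2 + δ/2)) *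
          r ^ (-1 - 3*δ) := by rw [habs]
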